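/- Let $I \subseteq \{1,\dots,N\}$ with $|I| = k$, and let $K, K' \subseteq \{1,\dots,k\}$ with $|K| = |K'| = l$. Then for any $N \times N$ complex matrix $X$ and any $J \subseteq \{1,\dots,N\}$ with $|J| = k$: $\delta_{K,K'} \det X[I,J] = \sum_{P \in \binom{[k]}{l}} (-1)^{\mathrm{wt}(P) - \mathrm{wt}(K)} \det X[I_K, J_P] \cdot \det X[I^{K'}, J^P]$, where $I_K = \{i_p : p \in K\}$, $I^K = I \setminus I_K$, and similarly for $J$. -/

import Mathlib

open Matrix

/-- Minor of `X` with rows `A` and columns `B` (increasing order); junk `0` if cards differ. -/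
noncomputable def minorC {N : ℕ} (X : Matrix (Fin N) (Fin N) ℂ) (A B : Finset (Fin N)) : ℂ :=
  if h : B.card = A.card then
    Matrix.det (Matrix.of fun (a b : Fin A.card) =>
      X (A.orderEmbOfFin rfl a) (B.orderEmbOfFin h b))
  else 0

/-- `I_K`: the subset of `I` whose positions (in increasing order) lie in `K`. -/
def subIdx {N k : ℕ} (I : Finset (Fin N)) (hI : I.card = k) (K : Finset (Fin k)) :
    Finset (Fin N) :=
  K.image (fun p => I.orderEmbOfFin hI p)

/-- 1-indexed weight of a subset of positions. -/
def wtF {k : ℕ} (K : Finset (Fin k)) : ℕ := ∑ p ∈ K, ((p : ℕ) + 1)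

/-!
Grouping the permutations of the Leibniz formula for `det Y` by the set `P` of columns they send
to the rows `K`, the terms with a given `P` add up to the determinant of `Y` with the blocks
`K × Pᶜ` and `Kᶜ × P` erased. Conjugating by the shuffles that move `K` and `P` to the front
makes that matrix block diagonal, so its determinant is `± det Y[K,P] * det Y[Kᶜ,Pᶜ]`. The
shuffle of `A` has sign `(-1) ^ (wt A - #A (#A + 1) / 2)`: moving an element of `A` down into an
adjacent gap lowers the weight by one and multiplies the shuffle by a transposition, and the
shuffle of an initial segment is the identity.

For `K ≠ K'` the sum is the expansion along `K'` of the matrix whose rows `K'` are replaced by the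
rows `K`, which has two equal rows. Minors of `X` on `I × J` are minors of the `k × k` matrix
`X[I,J]`, which turns the general statement into the expansion of `det X[I,J]`.
-/

open Finset Equiv Matrix

namespace LaplaceExpansion

lemma neg_one_pow_add_mul_neg_one_pow_add {M : Type*} [Monoid M] [HasDistribNeg M] (a b c : ℕ) :
    (-1 : M) ^ (a + b) * (-1) ^ (b + c) = (-1) ^ (a + c) := by
  rw [← pow_add, show a + b + (b + c) = a + c + 2 * b by ring, pow_add, pow_mul, neg_one_sq,
    one_pow, mul_one]

lemma neg_one_zpow_natCast_sub {F : Type*} [DivisionRing F] (a b : ℕ) :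
    (-1 : F) ^ ((a : ℤ) - b) = (-1) ^ (b + a) := by
  rw [zpow_sub₀ (neg_ne_zero.mpr one_ne_zero), zpow_natCast, zpow_natCast, div_eq_mul_inv,
    ← inv_pow, inv_neg_one, ← pow_add, add_comm]

variable {n : ℕ}

lemma card_add_card_compl_fin (A : Finset (Fin n)) : A.card + Aᶜ.card = n := by
  rw [card_add_card_compl, Fintype.card_fin]

noncomputable def sortedSumEquiv (A : Finset (Fin n)) : Fin A.card ⊕ Fin Aᶜ.card ≃ Fin n :=
  (Equiv.sumCongr (A.orderIsoOfFin rfl).toEquiv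
    ((Aᶜ.orderIsoOfFin rfl).toEquiv.trans (subtypeEquivRight fun _ => mem_compl))).trans
    (Equiv.sumCompl (· ∈ A))

def indexSumEquiv (A : Finset (Fin n)) : Fin A.card ⊕ Fin Aᶜ.card ≃ Fin n :=
  finSumFinEquiv.trans (finCongr (card_add_card_compl_fin A))

noncomputable def shufflePerm (A : Finset (Fin n)) : Perm (Fin n) :=
  (indexSumEquiv A).symm.trans (sortedSumEquiv A)

lemma shufflePerm_apply_of_lt (A : Finset (Fin n)) {x : Fin n} (hx : (x : ℕ) < A.card) :
    shufflePerm A x = A.orderEmbOfFin rfl ⟨x, hx⟩ := by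
  rw [shufflePerm, trans_apply, (Equiv.symm_apply_eq _).mpr
    (show x = indexSumEquiv A (.inl ⟨x, hx⟩) from Fin.ext (by simp [indexSumEquiv]))]
  rfl

lemma shufflePerm_apply_of_le (A : Finset (Fin n)) {x : Fin n} (hx : A.card ≤ (x : ℕ)) :
    shufflePerm A x =
      Aᶜ.orderEmbOfFin rfl ⟨x - A.card, by have := card_add_card_compl_fin A; omega⟩ := by
  rw [shufflePerm, trans_apply, (Equiv.symm_apply_eq _).mpr
    (show x = indexSumEquiv A (.inr ⟨x - A.card, _⟩) from
      Fin.ext (by simp [indexSumEquiv]; omega))]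
  rfl

lemma shufflePerm_indexSumEquiv_inl {A B : Finset (Fin n)} (h : A.card = B.card)
    (i : Fin B.card) :
    shufflePerm A (indexSumEquiv B (.inl i)) = A.orderEmbOfFin h i := by
  rw [shufflePerm_apply_of_lt A (by simp [indexSumEquiv, h])]
  simp [orderEmbOfFin_apply, indexSumEquiv]

lemma shufflePerm_indexSumEquiv_inr {A B : Finset (Fin n)} (h : A.card = B.card)
    (j : Fin Bᶜ.card) :
    shufflePerm A (indexSumEquiv B (.inr j)) =
      Aᶜ.orderEmbOfFin (by rw [card_compl, card_compl, h]) j := by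
  rw [shufflePerm_apply_of_le A (by simp [indexSumEquiv, h])]
  simp [orderEmbOfFin_apply, indexSumEquiv, h]

lemma shufflePerm_mem_iff (A : Finset (Fin n)) (x : Fin n) :
    shufflePerm A x ∈ A ↔ (x : ℕ) < A.card := by
  rcases lt_or_ge (x : ℕ) A.card with hx | hx
  · simp [shufflePerm_apply_of_lt A hx, hx]
  · rw [shufflePerm_apply_of_le A hx, iff_false_intro hx.not_gt, iff_false, ← mem_compl]
    exact orderEmbOfFin_mem _ _ _

lemma shufflePerm_lt_shufflePerm (A : Finset (Fin n)) {x y : Fin n} (hxy : x < y)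
    (hblock : (y : ℕ) < A.card ∨ A.card ≤ (x : ℕ)) : shufflePerm A x < shufflePerm A y := by
  rcases hblock with hy | hx
  · rw [shufflePerm_apply_of_lt A (lt_trans hxy hy), shufflePerm_apply_of_lt A hy]
    exact (A.orderEmbOfFin rfl).strictMono hxy
  · rw [shufflePerm_apply_of_le A hx, shufflePerm_apply_of_le A (hx.trans hxy.le)]
    exact (Aᶜ.orderEmbOfFin rfl).strictMono (Fin.mk_lt_mk.mpr (by rw [Fin.lt_def] at hxy; omega))

lemma eq_shufflePerm {A : Finset (Fin n)} {σ : Perm (Fin n)}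
    (hmem : ∀ x, σ x ∈ A ↔ (x : ℕ) < A.card)
    (hmono : ∀ x y : Fin n, x < y → ((y : ℕ) < A.card ∨ A.card ≤ (x : ℕ)) →
      σ x < σ y) :
    σ = shufflePerm A := by
  have hcard := card_add_card_compl_fin A
  ext1 x
  rcases lt_or_ge (x : ℕ) A.card with hx | hx
  · rw [shufflePerm_apply_of_lt A hx]
    have hemb := orderEmbOfFin_unique (s := A) (f := fun i : Fin A.card => σ ⟨i, by omega⟩) rfl
      (fun i => (hmem _).mpr i.2) (fun i j hij => hmono _ _ hij (.inl j.2))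
    exact congrFun hemb ⟨x, hx⟩
  · rw [shufflePerm_apply_of_le A hx]
    have hemb := orderEmbOfFin_unique (s := Aᶜ)
      (f := fun j : Fin Aᶜ.card => σ ⟨A.card + j, by omega⟩) rfl
      (fun j => mem_compl.mpr fun h => by have := (hmem _).mp h; simp at this)
      (fun i j hij => hmono _ _ (Fin.mk_lt_mk.mpr (by rw [Fin.lt_def] at hij; omega))
        (.inr le_self_add))
    convert congrFun hemb ⟨x - A.card, by omega⟩ using 2
    ext; simp only; omega

lemma swap_lt_swap_of_succ_eq {a b u v : Fin n} (hba : (b : ℕ) + 1 = a) (huv : u < v)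
    (hne : ¬(u = b ∧ v = a)) : swap b a u < swap b a v := by
  rw [Fin.lt_def, swap_apply_def, swap_apply_def]
  split_ifs <;> simp only [Fin.ext_iff, Fin.lt_def] at * <;> omega

lemma swap_mem_iff {A : Finset (Fin n)} {a b : Fin n} (ha : a ∈ A) (hb : b ∉ A) (y : Fin n) :
    swap b a y ∈ A ↔ y ∈ insert b (A.erase a) := by
  rcases eq_or_ne y b with rfl | hyb
  · simp [ha]
  rcases eq_or_ne y a with rfl | hya
  · simp [hb, hyb]
  simp [swap_apply_of_ne_of_ne hyb hya, hyb, hya]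

lemma card_insert_erase_of_mem_of_notMem {A : Finset (Fin n)} {a b : Fin n} (ha : a ∈ A)
    (hb : b ∉ A) : (insert b (A.erase a)).card = A.card := by
  rw [card_insert_of_notMem (fun h => hb (mem_of_mem_erase h)), card_erase_add_one ha]

lemma shufflePerm_eq_swap_mul {A : Finset (Fin n)} {a b : Fin n} (ha : a ∈ A) (hb : b ∉ A)
    (hba : (b : ℕ) + 1 = a) :
    shufflePerm A = swap b a * shufflePerm (insert b (A.erase a)) := by
  set A' := insert b (A.erase a)
  have hcard : A'.card = A.card := card_insert_erase_of_mem_of_notMem ha hb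
  refine (eq_shufflePerm (fun x => ?_) fun x y hxy hblock => ?_).symm
  · rw [Perm.mul_apply, swap_mem_iff ha hb, shufflePerm_mem_iff, hcard]
  · rw [← hcard] at hblock
    refine swap_lt_swap_of_succ_eq hba (shufflePerm_lt_shufflePerm A' hxy hblock) ?_
    rintro ⟨hx, hy⟩
    have hxA' := (shufflePerm_mem_iff A' x).mp (hx ▸ mem_insert_self b _)
    have hyA' : ¬(y : ℕ) < A'.card := by
      rw [← shufflePerm_mem_iff, hy]
      simp [A', Fin.ext_iff, ← hba]
    rw [Fin.lt_def] at hxy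
    omega

lemma mem_iff_lt_card_of_forall_pred_mem {A : Finset (Fin n)}
    (hA : ∀ a ∈ A, ∀ b : Fin n, (b : ℕ) + 1 = a → b ∈ A) (x : Fin n) :
    x ∈ A ↔ (x : ℕ) < A.card := by
  have hdown : ∀ d, ∀ a ∈ A, ∀ b : Fin n, (b : ℕ) + d = a → b ∈ A := by
    intro d
    induction d with
    | zero => intro a ha b hab; rwa [show b = a from Fin.ext (by simpa using hab)]
    | succ d ih =>
      intro a ha b hab
      exact ih _ (hA a ha ⟨b + d, by have := a.isLt; omega⟩ (by simp only; omega)) b rfl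
  have hle : ∀ a ∈ A, ∀ b ≤ a, b ∈ A := fun a ha b hb =>
    hdown (a - b : ℕ) a ha b (by rw [Fin.le_def] at hb; omega)
  constructor
  · intro hx
    have := card_le_card fun b hb => hle x hx b (mem_Iic.mp hb)
    rw [Fin.card_Iic] at this
    omega
  · intro hx
    by_contra hxA
    have := card_le_card fun a ha =>
      mem_Iio.mpr (lt_of_not_ge fun hxa => hxA (hle a ha x hxa))
    rw [Fin.card_Iio] at this
    omega

lemma wtF_insert_erase_add_one {A : Finset (Fin n)} {a b : Fin n} (ha : a ∈ A) (hb : b ∉ A)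
    (hba : (b : ℕ) + 1 = a) : wtF (insert b (A.erase a)) + 1 = wtF A := by
  rw [wtF, wtF, sum_insert (fun h => hb (mem_of_mem_erase h)), ← sum_erase_add A _ ha]
  omega

lemma wtF_eq_sum_range {A : Finset (Fin n)} (hA : ∀ x, x ∈ A ↔ (x : ℕ) < A.card) :
    wtF A = ∑ i ∈ range A.card, (i + 1) := by
  have hval : A.map Fin.valEmbedding = range A.card := by
    ext i
    simp only [mem_map, Fin.valEmbedding_apply, mem_range]
    exact ⟨by rintro ⟨x, hx, rfl⟩; exact (hA x).mp hx,
      fun hi => ⟨⟨i, by have := A.card_le_univ; simp at this; omega⟩, (hA _).mpr hi, rfl⟩⟩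
  rw [wtF, ← hval, sum_map]
  rfl

theorem sign_shufflePerm (A : Finset (Fin n)) :
    Perm.sign (shufflePerm A) = (-1) ^ (wtF A + ∑ i ∈ range A.card, (i + 1)) := by
  induction hw : wtF A using Nat.strong_induction_on generalizing A with
  | _ w ih =>
  by_cases hgap : ∃ a ∈ A, ∃ b ∉ A, (b : ℕ) + 1 = a
  · obtain ⟨a, ha, b, hb, hba⟩ := hgap
    have hwt := wtF_insert_erase_add_one ha hb hba
    rw [shufflePerm_eq_swap_mul ha hb hba, Perm.sign_mul,
      Perm.sign_swap (by simp [Fin.ext_iff, ← hba]), ih _ (by omega) _ rfl,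
      card_insert_erase_of_mem_of_notMem ha hb, ← hw, ← hwt, add_right_comm, pow_succ']
  · push Not at hgap
    have hmem := mem_iff_lt_card_of_forall_pred_mem fun a ha b hba => by
      by_contra hb; exact hgap a ha b hb hba
    rw [← eq_shufflePerm (σ := 1) (fun x => hmem x) fun x y hxy _ => hxy, Perm.sign_one, ← hw,
      wtF_eq_sum_range hmem, ← two_mul, pow_mul, Int.units_sq, one_pow]

lemma sign_shufflePerm_mul_sign_shufflePerm {K P : Finset (Fin n)} (hPK : P.card = K.card) :
    Perm.sign (shufflePerm K) * Perm.sign (shufflePerm P) = (-1) ^ (wtF K + wtF P) := by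
  rw [sign_shufflePerm, sign_shufflePerm, hPK, add_comm (wtF P),
    neg_one_pow_add_mul_neg_one_pow_add]

section BlockPart

variable {R : Type*} [CommRing R]

def blockPart (Y : Matrix (Fin n) (Fin n) R) (K P : Finset (Fin n)) : Matrix (Fin n) (Fin n) R :=
  of fun i j => if (i ∈ K ↔ j ∈ P) then Y i j else 0

lemma det_blockPart_eq_sum_filter (Y : Matrix (Fin n) (Fin n) R) (K P : Finset (Fin n)) :
    (blockPart Y K P).det =
      ∑ σ : Perm (Fin n) with K.map σ.symm.toEmbedding = P,
        Perm.sign σ • ∏ i, Y (σ i) i := by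
  rw [det_apply, sum_filter]
  refine sum_congr rfl fun σ _ => ?_
  split_ifs with hσ
  · refine congrArg _ (prod_congr rfl fun i _ => if_pos ?_)
    rw [← hσ, mem_map_equiv, symm_symm]
  · obtain ⟨i, hi⟩ : ∃ i, ¬(σ i ∈ K ↔ i ∈ P) := by
      by_contra! h
      exact hσ (ext fun i => by rw [mem_map_equiv, symm_symm, h])
    rw [prod_eq_zero (mem_univ i) (if_neg hi), smul_zero]

lemma det_eq_sum_det_blockPart (Y : Matrix (Fin n) (Fin n) R) (K : Finset (Fin n)) :
    Y.det = ∑ P ∈ powersetCard K.card univ, (blockPart Y K P).det := by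
  rw [det_apply, ← sum_fiberwise_of_maps_to
    (g := fun σ : Perm (Fin n) => K.map σ.symm.toEmbedding)
    fun σ _ => mem_powersetCard_univ.mpr (card_map _)]
  exact sum_congr rfl fun P _ => (det_blockPart_eq_sum_filter Y K P).symm

end BlockPart

section Minor

variable {N : ℕ}

lemma minorC_eq_det (X : Matrix (Fin N) (Fin N) ℂ) {A B : Finset (Fin N)} {m : ℕ}
    (hA : A.card = m) (hB : B.card = m) :
    minorC X A B = (X.submatrix (A.orderEmbOfFin hA) (B.orderEmbOfFin hB)).det := by
  subst hA
  exact dif_pos hB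

lemma minorC_of_card_ne (X : Matrix (Fin N) (Fin N) ℂ) {A B : Finset (Fin N)}
    (h : B.card ≠ A.card) : minorC X A B = 0 :=
  dif_neg h

end Minor

theorem det_blockPart (Y : Matrix (Fin n) (Fin n) ℂ) {K P : Finset (Fin n)}
    (hPK : P.card = K.card) :
    (blockPart Y K P).det = (-1) ^ (wtF K + wtF P) * minorC Y K P * minorC Y Kᶜ Pᶜ := by
  have hc : Pᶜ.card = Kᶜ.card := by rw [card_compl, card_compl, hPK]
  have hblocks : ((blockPart Y K P).submatrix (shufflePerm K) (shufflePerm P)).submatrix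
      (indexSumEquiv K) (indexSumEquiv K) =
        fromBlocks (Y.submatrix (K.orderEmbOfFin rfl) (P.orderEmbOfFin hPK)) 0 0
          (Y.submatrix (Kᶜ.orderEmbOfFin rfl) (Pᶜ.orderEmbOfFin hc)) := by
    have hout : ∀ (A : Finset (Fin n)) {m} (h : Aᶜ.card = m) j, Aᶜ.orderEmbOfFin h j ∉ A :=
      fun A _ h j => mem_compl.mp (orderEmbOfFin_mem _ h j)
    ext (a | a) (b | b) <;>
      simp [blockPart, shufflePerm_indexSumEquiv_inl, shufflePerm_indexSumEquiv_inr, hPK, hout]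
  have hdet := congrArg det hblocks
  rw [det_submatrix_equiv_self, det_fromBlocks_zero₂₁, ← minorC_eq_det, ← minorC_eq_det,
    show (blockPart Y K P).submatrix (shufflePerm K) (shufflePerm P) =
      ((blockPart Y K P).submatrix id (shufflePerm P)).submatrix (shufflePerm K) id from rfl,
    det_permute, det_permute'] at hdet
  have hsign : ((Perm.sign (shufflePerm K) : ℤ) : ℂ) * (Perm.sign (shufflePerm P) : ℤ) =
      (-1) ^ (wtF K + wtF P) := by
    rw [← Int.cast_mul, ← Units.val_mul, sign_shufflePerm_mul_sign_shufflePerm hPK]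
    push_cast
    rfl
  have hsq : ((-1 : ℂ) ^ (wtF K + wtF P)) * (-1) ^ (wtF K + wtF P) = 1 := by
    rw [← pow_add, ← two_mul, pow_mul, neg_one_sq, one_pow]
  linear_combination (-1 : ℂ) ^ (wtF K + wtF P) * hdet
    - (-1 : ℂ) ^ (wtF K + wtF P) * (blockPart Y K P).det * hsign - (blockPart Y K P).det * hsq

theorem det_eq_sum_minorC_mul_minorC_compl (Y : Matrix (Fin n) (Fin n) ℂ) (K : Finset (Fin n)) :
    Y.det = ∑ P ∈ powersetCard K.card univ,
      (-1) ^ (wtF K + wtF P) * minorC Y K P * minorC Y Kᶜ Pᶜ := by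
  rw [det_eq_sum_det_blockPart Y K]
  exact sum_congr rfl fun P hP => det_blockPart Y (mem_powersetCard_univ.mp hP)

lemma minorC_submatrix_left {N : ℕ} (X : Matrix (Fin N) (Fin N) ℂ) (ρ : Fin N → Fin N)
    {A A' B : Finset (Fin N)} {m : ℕ} (hA : A.card = m) (hA' : A'.card = m)
    (hρ : ∀ t, ρ (A.orderEmbOfFin hA t) = A'.orderEmbOfFin hA' t) :
    minorC (X.submatrix ρ id) A B = minorC X A' B := by
  by_cases hB : B.card = m
  · rw [minorC_eq_det _ hA hB, minorC_eq_det _ hA' hB, submatrix_submatrix]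
    congr 2
    exact funext hρ
  · rw [minorC_of_card_ne _ (by rwa [hA]), minorC_of_card_ne _ (by rwa [hA'])]

theorem sum_minorC_mul_minorC_compl_eq_zero (Y : Matrix (Fin n) (Fin n) ℂ)
    {K K' : Finset (Fin n)} (hK' : K'.card = K.card) (hne : K ≠ K') :
    ∑ P ∈ powersetCard K.card univ,
      (-1) ^ (wtF K + wtF P) * minorC Y K P * minorC Y K'ᶜ Pᶜ = 0 := by
  let ρ : Fin n → Fin n := fun i =>
    if h : i ∈ K' then K.orderEmbOfFin rfl ((K'.orderIsoOfFin hK').symm ⟨i, h⟩) else i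
  have hρK' : ∀ t, ρ (K'.orderEmbOfFin hK' t) = K.orderEmbOfFin rfl t := fun t => by
    simp only [ρ, dif_pos (orderEmbOfFin_mem K' hK' t)]
    congr 1
    rw [OrderIso.symm_apply_eq]
    exact Subtype.ext (coe_orderIsoOfFin_apply K' hK' t).symm
  have hρ_compl : ∀ i ∉ K', ρ i = i := fun i hi => dif_neg hi
  obtain ⟨a, haK, haK'⟩ : ∃ a ∈ K, a ∉ K' :=
    not_subset.mp fun h => hne (eq_of_subset_of_card_le h hK'.le)
  obtain ⟨t, rfl⟩ : ∃ t, K.orderEmbOfFin rfl t = a :=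
    Set.mem_range.mp (by rw [range_orderEmbOfFin]; exact haK)
  have hrows_ne : K.orderEmbOfFin rfl t ≠ K'.orderEmbOfFin hK' t :=
    fun h => haK' (h ▸ orderEmbOfFin_mem K' hK' t)
  have hdet : (Y.submatrix ρ id).det = 0 :=
    det_zero_of_row_eq hrows_ne (by
      ext c
      rw [submatrix_apply, submatrix_apply, hρK', hρ_compl _ haK'])
  have hexp := det_eq_sum_minorC_mul_minorC_compl (Y.submatrix ρ id) K'
  rw [hK', hdet] at hexp
  rw [← mul_zero ((-1 : ℂ) ^ (wtF K + wtF K')), hexp, mul_sum]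
  refine sum_congr rfl fun P _ => ?_
  rw [minorC_submatrix_left Y ρ hK' rfl hρK', minorC_submatrix_left Y ρ rfl rfl
    fun s => hρ_compl _ (mem_compl.mp (orderEmbOfFin_mem _ _ s)),
    ← neg_one_pow_add_mul_neg_one_pow_add (wtF K) (wtF K') (wtF P)]
  ring

section SubIdx

variable {N k : ℕ}

lemma card_subIdx (I : Finset (Fin N)) (hI : I.card = k) (A : Finset (Fin k)) :
    (subIdx I hI A).card = A.card :=
  card_image_of_injective _ (I.orderEmbOfFin hI).injective

lemma orderEmbOfFin_subIdx (I : Finset (Fin N)) (hI : I.card = k) (A : Finset (Fin k)) {m : ℕ}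
    (h : (subIdx I hI A).card = m) (hA : A.card = m) (t : Fin m) :
    (subIdx I hI A).orderEmbOfFin h t = I.orderEmbOfFin hI (A.orderEmbOfFin hA t) :=
  (congrFun (orderEmbOfFin_unique h (fun t => mem_image_of_mem _ (orderEmbOfFin_mem A hA t))
    ((I.orderEmbOfFin hI).strictMono.comp (A.orderEmbOfFin hA).strictMono)) t).symm

lemma sdiff_subIdx (I : Finset (Fin N)) (hI : I.card = k) (A : Finset (Fin k)) :
    I \ subIdx I hI A = subIdx I hI Aᶜ := by
  rw [subIdx, subIdx, compl_eq_univ_sdiff, image_sdiff _ _ (I.orderEmbOfFin hI).injective,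
    image_orderEmbOfFin_univ]

lemma minorC_subIdx (X : Matrix (Fin N) (Fin N) ℂ) {I J : Finset (Fin N)} (hI : I.card = k)
    (hJ : J.card = k) (A B : Finset (Fin k)) :
    minorC X (subIdx I hI A) (subIdx J hJ B) =
      minorC (X.submatrix (I.orderEmbOfFin hI) (J.orderEmbOfFin hJ)) A B := by
  by_cases hB : B.card = A.card
  · rw [minorC_eq_det _ (card_subIdx I hI A) ((card_subIdx J hJ B).trans hB),
      minorC_eq_det _ rfl hB, submatrix_submatrix]
    congr 2 <;> funext t <;> apply orderEmbOfFin_subIdx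
  · rw [minorC_of_card_ne _ (by rwa [card_subIdx, card_subIdx]), minorC_of_card_ne _ hB]

end SubIdx

end LaplaceExpansion

open LaplaceExpansion in
theorem stmt14 (N k l : ℕ) (I : Finset (Fin N)) (hI : I.card = k)
    (K K' : Finset (Fin k)) (hK : K.card = l) (hK' : K'.card = l)
    (X : Matrix (Fin N) (Fin N) ℂ) (J : Finset (Fin N)) (hJ : J.card = k) :
    (if K = K' then (1 : ℂ) else 0) * minorC X I J =
      ∑ P ∈ Finset.univ.powersetCard l,
        ((-1 : ℂ) ^ ((wtF P : ℤ) - (wtF K : ℤ))) *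
          minorC X (subIdx I hI K) (subIdx J hJ P) *
          minorC X (I \ subIdx I hI K') (J \ subIdx J hJ P) := by
  subst hK
  set Y := X.submatrix (I.orderEmbOfFin hI) (J.orderEmbOfFin hJ)
  have hsummand : ∀ P : Finset (Fin k),
      (-1 : ℂ) ^ ((wtF P : ℤ) - (wtF K : ℤ)) * minorC X (subIdx I hI K) (subIdx J hJ P) *
        minorC X (I \ subIdx I hI K') (J \ subIdx J hJ P) =
      (-1) ^ (wtF K + wtF P) * minorC Y K P * minorC Y K'ᶜ Pᶜ := fun P => by
    rw [neg_one_zpow_natCast_sub, sdiff_subIdx, sdiff_subIdx, minorC_subIdx, minorC_subIdx]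
  rw [sum_congr rfl fun P _ => hsummand P]
  rw [minorC_eq_det X hI hJ]
  split_ifs with hKK'
  · rw [one_mul, ← hKK', ← det_eq_sum_minorC_mul_minorC_compl]
  · rw [zero_mul, sum_minorC_mul_minorC_compl_eq_zero Y hK' hKK']
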